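/- There exist a database D, a set Σ of warded Datalog± rules (containing a join on a harmful variable), and two facts a and b in chase-graph(D,Σ) such that a and b are isomorphic but subgraph(a) is not isomorphic to subgraph(b); hence the conclusion of Theorem 2 fails for general warded rules, i.e., pruning the chase graph on the basis of isomorphism on labelled nulls is not correct without the harmlessness restriction. (Claim established by Example 3) -/
import Mathlib


namespace Vadalog

/-- A ground term: a constant or a labelled null. -/
inductive GTerm (C N : Type) where
  | const : C → GTerm C N
  | null  : N → GTerm C N

/-- A fact: a predicate name applied to a list of ground terms. -/
structure Fact (P C N : Type) where
  pred : P
  args : List (GTerm C N)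

/-- A rule term: a constant or a variable. -/
inductive RTerm (C V : Type) where
  | const : C → RTerm C V
  | var   : V → RTerm C V

/-- An atom of a rule: a predicate name applied to rule terms. -/
structure Atom (P C V : Type) where
  pred : P
  args : List (RTerm C V)

/-- A Datalog± rule, given by its body atoms and head atoms.  The head
variables not occurring in the body are understood as existentially
quantified; all other variables are universally quantified. -/
structure Rule (P C V : Type) where
  body : List (Atom P C V)
  head : List (Atom P C V)

variable {P C V N : Type}

def Atom.vars (a : Atom P C V) : Set V := {v | RTerm.var v ∈ a.args}

def Rule.bodyVars (ρ : Rule P C V) : Set V := {v | ∃ a ∈ ρ.body, v ∈ a.vars}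
def Rule.headVars (ρ : Rule P C V) : Set V := {v | ∃ a ∈ ρ.head, v ∈ a.vars}
/-- The existentially quantified variables of a rule. -/
def Rule.existVars (ρ : Rule P C V) : Set V := ρ.headVars \ ρ.bodyVars
/-- A rule is linear if its body consists of a single atom. -/
def Rule.IsLinear (ρ : Rule P C V) : Prop := ρ.body.length = 1

def RTerm.inst (ν : V → GTerm C N) : RTerm C V → GTerm C N
  | .const c => .const c
  | .var v   => ν v

/-- Instantiation of an atom by an assignment of variables to ground terms. -/
def Atom.inst (ν : V → GTerm C N) (a : Atom P C V) : Fact P C N :=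
  ⟨a.pred, a.args.map (RTerm.inst ν)⟩

def Fact.nulls (f : Fact P C N) : Set N := {n | GTerm.null n ∈ f.args}

def GTerm.mapNull (σ : N → N) : GTerm C N → GTerm C N
  | .const c => .const c
  | .null n  => .null (σ n)

def GTerm.mapBoth (τ : C → C) (σ : N → N) : GTerm C N → GTerm C N
  | .const c => .const (τ c)
  | .null n  => .null (σ n)

/-- Two facts are isomorphic: same predicate name, same constants in the same
positions, and a bijection of labelled nulls mapping one to the other. -/
def FactIso (a b : Fact P C N) : Prop :=
  a.pred = b.pred ∧ ∃ σ : N ≃ N, a.args.map (GTerm.mapNull σ) = b.args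

/-- Two facts are pattern-isomorphic: same predicate name, and a bijection of
constants together with a bijection of labelled nulls mapping one to the other. -/
def FactPatternIso (a b : Fact P C N) : Prop :=
  a.pred = b.pred ∧ ∃ (τ : C ≃ C) (σ : N ≃ N), a.args.map (GTerm.mapBoth τ σ) = b.args

/-- Variable `v` occurs at position `i` of atom `a`. -/
def Atom.varAt (a : Atom P C V) (i : ℕ) (v : V) : Prop :=
  a.args[i]? = some (RTerm.var v)

/-- The affected positions of a rule set: positions where labelled nulls can
be produced during the chase. -/
inductive AffectedPos (Γ : Set (Rule P C V)) : P → ℕ → Prop where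
  | exist {ρ : Rule P C V} {a : Atom P C V} {i : ℕ} {v : V} :
      ρ ∈ Γ → a ∈ ρ.head → a.varAt i v → v ∈ ρ.existVars → AffectedPos Γ a.pred i
  | prop {ρ : Rule P C V} {a : Atom P C V} {i : ℕ} {v : V} :
      ρ ∈ Γ → a ∈ ρ.head → a.varAt i v → v ∈ ρ.bodyVars →
      (∀ b ∈ ρ.body, ∀ j, b.varAt j v → AffectedPos Γ b.pred j) →
      AffectedPos Γ a.pred i

/-- A body variable is harmful if it occurs in the body only at affected
positions (so it can be bound to a labelled null during the chase). -/
def Harmful (Γ : Set (Rule P C V)) (ρ : Rule P C V) (v : V) : Prop :=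
  v ∈ ρ.bodyVars ∧ ∀ b ∈ ρ.body, ∀ j, b.varAt j v → AffectedPos Γ b.pred j

/-- A harmful variable that also occurs in the head is dangerous. -/
def Dangerous (Γ : Set (Rule P C V)) (ρ : Rule P C V) (v : V) : Prop :=
  Harmful Γ ρ v ∧ v ∈ ρ.headVars

/-- `w` is a ward of rule `ρ`: a body atom containing all dangerous variables,
which only occur there, and sharing only harmless variables with the other
body atoms. -/
def IsWard (Γ : Set (Rule P C V)) (ρ : Rule P C V) (w : Atom P C V) : Prop :=
  w ∈ ρ.body ∧
  (∀ v, Dangerous Γ ρ v → v ∈ w.vars ∧ ∀ b ∈ ρ.body, v ∈ b.vars → b = w) ∧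
  (∀ b ∈ ρ.body, b ≠ w → ∀ v, v ∈ w.vars → v ∈ b.vars → ¬ Harmful Γ ρ v)

/-- A rule set is warded if every rule with a dangerous variable has a ward. -/
def Warded (Γ : Set (Rule P C V)) : Prop :=
  ∀ ρ ∈ Γ, (∃ v, Dangerous Γ ρ v) → ∃ w, IsWard Γ ρ w

/-- A rule has a harmful join if some harmful variable occurs in two distinct
body atoms. -/
def HasHarmfulJoin (Γ : Set (Rule P C V)) (ρ : Rule P C V) : Prop :=
  ∃ v, Harmful Γ ρ v ∧ ∃ i j : ℕ, i < j ∧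
    (∃ a : Atom P C V, ρ.body[i]? = some a ∧ v ∈ a.vars) ∧
    (∃ b : Atom P C V, ρ.body[j]? = some b ∧ v ∈ b.vars)

/-- Harmless Warded Datalog±: warded and no joins on harmful variables. -/
def HarmlessWarded (Γ : Set (Rule P C V)) : Prop :=
  Warded Γ ∧ ∀ ρ ∈ Γ, ¬ HasHarmfulJoin Γ ρ

/-- An entry of a chase run: a fact together with (for non-database facts) the
trigger (rule, assignment, head atom) that produced it. -/
structure ChaseEntry (P C V N : Type) where
  fact : Fact P C N
  origin : Option (Rule P C V × (V → GTerm C N) × Atom P C V)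

/-- The facts generated along a chase run. -/
def runFacts (e : ℕ → Option (ChaseEntry P C V N)) : Set (Fact P C N) :=
  {f | ∃ n E, e n = some E ∧ E.fact = f}

def factAt (e : ℕ → Option (ChaseEntry P C V N)) (n : ℕ) (f : Fact P C N) : Prop :=
  ∃ E, e n = some E ∧ E.fact = f

/-- `e` is a (fair) chase run of the database `D` with the rule set `Γ`:
database facts are the facts without origin, every other fact is produced by a
valid chase step from earlier facts, existential variables are instantiated
with fresh labelled nulls, no fact is generated twice, and every applicable
trigger is eventually satisfied.  `chase(D,Γ)` is the set `runFacts e` of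
facts of such a run, and the chase graph is given by `ChaseEdge e`. -/
structure IsChaseRun (D : Set (Fact P C N)) (Γ : Set (Rule P C V))
    (e : ℕ → Option (ChaseEntry P C V N)) : Prop where
  halt : ∀ n, e n = none → e (n + 1) = none
  db_mem : ∀ f ∈ D, ∃ n E, e n = some E ∧ E.fact = f ∧ E.origin = none
  db_only : ∀ n E, e n = some E → E.origin = none → E.fact ∈ D
  sound : ∀ n E ρ ν h, e n = some E → E.origin = some (ρ, ν, h) →
      ρ ∈ Γ ∧ h ∈ ρ.head ∧ E.fact = Atom.inst ν h ∧
      ∀ a ∈ ρ.body, ∃ m, m < n ∧ factAt e m (Atom.inst ν a)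
  fresh : ∀ n E ρ ν h, e n = some E → E.origin = some (ρ, ν, h) →
      ∀ v ∈ ρ.existVars, ∃ k, ν v = GTerm.null k ∧
        ∀ m, m < n → ∀ E', e m = some E' → k ∉ E'.fact.nulls
  fresh_inj : ∀ n E ρ ν h, e n = some E → E.origin = some (ρ, ν, h) →
      ∀ v ∈ ρ.existVars, ∀ w ∈ ρ.existVars, ν v = ν w → v = w
  nodup : ∀ n m E E', n < m → e n = some E → e m = some E' → E.fact ≠ E'.fact
  fair : ∀ ρ ∈ Γ, ∀ ν : V → GTerm C N, (∀ a ∈ ρ.body, Atom.inst ν a ∈ runFacts e) →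
      ∃ ν' : V → GTerm C N, (∀ v ∈ ρ.bodyVars, ν' v = ν v) ∧
        ∀ h ∈ ρ.head, Atom.inst ν' h ∈ runFacts e

/-- Edge of the chase graph: `b` is obtained from `a` (and possibly other
facts) by one chase step. -/
def ChaseEdge (e : ℕ → Option (ChaseEntry P C V N)) (a b : Fact P C N) : Prop :=
  ∃ n E ρ ν h, e n = some E ∧ E.fact = b ∧ E.origin = some (ρ, ν, h) ∧
    ∃ c ∈ ρ.body, Atom.inst ν c = a

/-- Edge of the linear forest: an edge of the chase graph coming from the
application of a linear rule. -/
def LinearForestEdge (e : ℕ → Option (ChaseEntry P C V N)) (a b : Fact P C N) : Prop :=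
  ∃ n E ρ ν h, e n = some E ∧ E.fact = b ∧ E.origin = some (ρ, ν, h) ∧
    ρ.IsLinear ∧ ∃ c ∈ ρ.body, Atom.inst ν c = a

/-- Edge of the warded forest: all linear-rule edges of the chase graph and,
for non-linear rules, only the edge from the fact bound to the ward. -/
def WardedForestEdge (Γ : Set (Rule P C V)) (e : ℕ → Option (ChaseEntry P C V N))
    (a b : Fact P C N) : Prop :=
  ∃ n E ρ ν h, e n = some E ∧ E.fact = b ∧ E.origin = some (ρ, ν, h) ∧
    ((ρ.IsLinear ∧ ∃ c ∈ ρ.body, Atom.inst ν c = a) ∨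
     (¬ ρ.IsLinear ∧ ∃ w, IsWard Γ ρ w ∧ Atom.inst ν w = a))

/-- The nodes reachable from `a` along the edge relation `E`
(the subtree/subgraph rooted at `a`). -/
def Reach {α : Type} (E : α → α → Prop) (a : α) : Set α :=
  {x | Relation.ReflTransGen E a x}

/-- The substructure rooted at `a` is isomorphic to the substructure rooted at
`b`: there is a bijection between the reachable nodes which preserves edges in
both directions and whose node correspondences satisfy `iso`. -/
def SubIso {α : Type} (E : α → α → Prop) (iso : α → α → Prop) (a b : α) : Prop :=
  ∃ φ : Reach E a ≃ Reach E b,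
    (∀ x : Reach E a, iso x.1 (φ x).1) ∧
    (∀ x y : Reach E a, E x.1 y.1 ↔ E (φ x).1 (φ y).1)


namespace Ex3

/-- body atom `A(x₀)` -/
def aA : Atom ℕ Unit ℕ := ⟨0, [.var 0]⟩
/-- body atom `B(x₀)` -/
def aB : Atom ℕ Unit ℕ := ⟨1, [.var 0]⟩
/-- head atom `T(x₁)` -/
def aTh : Atom ℕ Unit ℕ := ⟨2, [.var 1]⟩
/-- head atom `S(x₁)` -/
def aSh : Atom ℕ Unit ℕ := ⟨3, [.var 1]⟩
/-- body atom `T(x₂)` -/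
def aTb : Atom ℕ Unit ℕ := ⟨2, [.var 2]⟩
/-- body atom `S(x₂)` -/
def aSb : Atom ℕ Unit ℕ := ⟨3, [.var 2]⟩
/-- head atom `Q` (no arguments) -/
def aQ : Atom ℕ Unit ℕ := ⟨4, []⟩

/-- `A(x₀) → ∃ x₁, T(x₁)` -/
def r1 : Rule ℕ Unit ℕ := ⟨[aA], [aTh]⟩
/-- `B(x₀) → ∃ x₁, S(x₁)` -/
def r2 : Rule ℕ Unit ℕ := ⟨[aB], [aSh]⟩
/-- `T(x₂) ∧ S(x₂) → Q` -/
def r3 : Rule ℕ Unit ℕ := ⟨[aTb, aSb], [aQ]⟩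

def G : Set (Rule ℕ Unit ℕ) := {r1, r2, r3}

def fA : Fact ℕ Unit ℕ := ⟨0, [.const ()]⟩
def fB : Fact ℕ Unit ℕ := ⟨1, [.const ()]⟩
def fT0 : Fact ℕ Unit ℕ := ⟨2, [.null 0]⟩
def fS0 : Fact ℕ Unit ℕ := ⟨3, [.null 0]⟩
def fT1 : Fact ℕ Unit ℕ := ⟨2, [.null 1]⟩
def fS2 : Fact ℕ Unit ℕ := ⟨3, [.null 2]⟩
def fQ : Fact ℕ Unit ℕ := ⟨4, []⟩

def D : Set (Fact ℕ Unit ℕ) := {fA, fB, fT0, fS0}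

def v1 : ℕ → GTerm Unit ℕ := fun v => if v = 1 then .null 1 else .const ()
def v2 : ℕ → GTerm Unit ℕ := fun v => if v = 1 then .null 2 else .const ()
def v3 : ℕ → GTerm Unit ℕ := fun _ => .null 0

def entries : List (ChaseEntry ℕ Unit ℕ ℕ) :=
  [⟨fA, none⟩, ⟨fB, none⟩, ⟨fT0, none⟩, ⟨fS0, none⟩,
   ⟨fT1, some (r1, v1, aTh)⟩, ⟨fS2, some (r2, v2, aSh)⟩, ⟨fQ, some (r3, v3, aQ)⟩]

def e : ℕ → Option (ChaseEntry ℕ Unit ℕ ℕ) := fun n => entries[n]?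

lemma bodyVars_r1 {v : ℕ} (h : v ∈ r1.bodyVars) : v = 0 := by
  simp [Rule.bodyVars, r1, aA, Atom.vars] at h
  exact h

lemma bodyVars_r2 {v : ℕ} (h : v ∈ r2.bodyVars) : v = 0 := by
  simp [Rule.bodyVars, r2, aB, Atom.vars] at h
  exact h

lemma headVars_r3 {v : ℕ} (h : v ∈ r3.headVars) : False := by
  simp [Rule.headVars, r3, aQ, Atom.vars] at h

lemma one_mem_existVars_r1 : 1 ∈ r1.existVars := by
  constructor
  · simp [Rule.headVars, r1, aTh, Atom.vars]
  · intro h; exact absurd (bodyVars_r1 h) (by norm_num)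

lemma one_mem_existVars_r2 : 1 ∈ r2.existVars := by
  constructor
  · simp [Rule.headVars, r2, aSh, Atom.vars]
  · intro h; exact absurd (bodyVars_r2 h) (by norm_num)

lemma affected_T : AffectedPos G 2 0 := by
  have : AffectedPos G aTh.pred 0 :=
    AffectedPos.exist (ρ := r1) (v := 1) (by simp [G]) (by simp [r1])
      (by simp [Atom.varAt, aTh]) one_mem_existVars_r1
  simpa [aTh] using this

lemma affected_S : AffectedPos G 3 0 := by
  have : AffectedPos G aSh.pred 0 :=
    AffectedPos.exist (ρ := r2) (v := 1) (by simp [G]) (by simp [r2])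
      (by simp [Atom.varAt, aSh]) one_mem_existVars_r2
  simpa [aSh] using this

lemma harmful_r3 : Harmful G r3 2 := by
  constructor
  · exact ⟨aTb, by simp [r3], by simp [aTb, Atom.vars]⟩
  · intro b hb j hj
    simp [r3] at hb
    rcases hb with rfl | rfl
    · match j with
      | 0 => exact affected_T
      | j + 1 => simp [Atom.varAt, aTb] at hj
    · match j with
      | 0 => exact affected_S
      | j + 1 => simp [Atom.varAt, aSb] at hj

lemma no_dangerous {ρ : Rule ℕ Unit ℕ} (hρ : ρ ∈ G) {v : ℕ}
    (hd : Dangerous G ρ v) : False := by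
  obtain ⟨⟨hbv, _⟩, hhv⟩ := hd
  rcases hρ with rfl | rfl | rfl
  · have h0 := bodyVars_r1 hbv
    simp [Rule.headVars, r1, aTh, Atom.vars] at hhv
    omega
  · have h0 := bodyVars_r2 hbv
    simp [Rule.headVars, r2, aSh, Atom.vars] at hhv
    omega
  · exact headVars_r3 hhv

lemma warded : Warded G := by
  intro ρ hρ ⟨v, hv⟩
  exact absurd hv (fun h => no_dangerous hρ h)

lemma harmful_join : HasHarmfulJoin G r3 := by
  refine ⟨2, harmful_r3, 0, 1, by norm_num, ⟨aTb, ?_, ?_⟩, ⟨aSb, ?_, ?_⟩⟩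
  · simp [r3]
  · simp [aTb, Atom.vars]
  · simp [r3]
  · simp [aSb, Atom.vars]

lemma mem_entries {n : ℕ} {E : ChaseEntry ℕ Unit ℕ ℕ} (h : e n = some E) :
    E ∈ entries := by
  exact List.mem_of_getElem? h


lemma e_lt {n : ℕ} {E : ChaseEntry ℕ Unit ℕ ℕ} (h : e n = some E) : n < 7 := by
  by_contra hc
  push_neg at hc
  rw [e, List.getElem?_eq_none (by simp [entries]; omega)] at h
  cases h

lemma fT1_mem : fT1 ∈ runFacts e := ⟨4, ⟨fT1, some (r1, v1, aTh)⟩, rfl, rfl⟩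
lemma fS2_mem : fS2 ∈ runFacts e := ⟨5, ⟨fS2, some (r2, v2, aSh)⟩, rfl, rfl⟩
lemma fQ_mem : fQ ∈ runFacts e := ⟨6, ⟨fQ, some (r3, v3, aQ)⟩, rfl, rfl⟩
lemma fT0_mem : fT0 ∈ runFacts e := ⟨2, ⟨fT0, none⟩, rfl, rfl⟩

lemma exist_r1 {v : ℕ} (h : v ∈ r1.existVars) : v = 1 := by
  have h1 := h.1
  simp [Rule.headVars, r1, aTh, Atom.vars] at h1
  exact h1

lemma exist_r2 {v : ℕ} (h : v ∈ r2.existVars) : v = 1 := by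
  have h1 := h.1
  simp [Rule.headVars, r2, aSh, Atom.vars] at h1
  exact h1

lemma chaseRun : IsChaseRun D G e := by
  constructor
  · -- halt
    intro n h
    rw [e, List.getElem?_eq_none_iff] at h ⊢
    simp [entries] at h ⊢
    omega
  · -- db_mem
    intro f hf
    rcases hf with rfl | rfl | rfl | rfl
    · exact ⟨0, ⟨fA, none⟩, rfl, rfl, rfl⟩
    · exact ⟨1, ⟨fB, none⟩, rfl, rfl, rfl⟩
    · exact ⟨2, ⟨fT0, none⟩, rfl, rfl, rfl⟩
    · exact ⟨3, ⟨fS0, none⟩, rfl, rfl, rfl⟩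
  · -- db_only
    intro n E hn ho
    have hm := mem_entries hn
    simp [entries] at hm
    rcases hm with rfl | rfl | rfl | rfl | rfl | rfl | rfl <;> simp_all [D]
  · -- sound
    intro n E ρ ν h hn ho
    have h7 := e_lt hn
    interval_cases n <;> simp [e, entries] at hn <;> subst hn <;> simp at ho
    · -- n = 4
      obtain ⟨rfl, rfl, rfl⟩ := ho
      refine ⟨by simp [G], by simp [r1], by simp [Atom.inst, aTh, RTerm.inst, v1, fT1], ?_⟩
      intro a ha
      simp [r1] at ha
      subst ha
      exact ⟨0, by norm_num, ⟨fA, none⟩, rfl, by simp [Atom.inst, aA, RTerm.inst, v1, fA]⟩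
    · -- n = 5
      obtain ⟨rfl, rfl, rfl⟩ := ho
      refine ⟨by simp [G], by simp [r2], by simp [Atom.inst, aSh, RTerm.inst, v2, fS2], ?_⟩
      intro a ha
      simp [r2] at ha
      subst ha
      exact ⟨1, by norm_num, ⟨fB, none⟩, rfl, by simp [Atom.inst, aB, RTerm.inst, v2, fB]⟩
    · -- n = 6
      obtain ⟨rfl, rfl, rfl⟩ := ho
      refine ⟨by simp [G], by simp [r3], by simp [Atom.inst, aQ, fQ], ?_⟩
      intro a ha
      simp [r3] at ha
      rcases ha with rfl | rfl
      · exact ⟨2, by norm_num, ⟨fT0, none⟩, rfl, by simp [Atom.inst, aTb, RTerm.inst, v3, fT0]⟩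
      · exact ⟨3, by norm_num, ⟨fS0, none⟩, rfl, by simp [Atom.inst, aSb, RTerm.inst, v3, fS0]⟩
  · -- fresh
    intro n E ρ ν h hn ho
    have h7 := e_lt hn
    interval_cases n <;> simp [e, entries] at hn <;> subst hn <;> simp at ho
    · obtain ⟨rfl, rfl, rfl⟩ := ho
      intro v hv
      rw [exist_r1 hv]
      refine ⟨1, by simp [v1], ?_⟩
      intro m hm E' hE'
      interval_cases m <;> simp [e, entries] at hE' <;> subst hE' <;>
        simp [Fact.nulls, fA, fB, fT0, fS0]
    · obtain ⟨rfl, rfl, rfl⟩ := ho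
      intro v hv
      rw [exist_r2 hv]
      refine ⟨2, by simp [v2], ?_⟩
      intro m hm E' hE'
      interval_cases m <;> simp [e, entries] at hE' <;> subst hE' <;>
        simp [Fact.nulls, fA, fB, fT0, fS0, fT1]
    · obtain ⟨rfl, rfl, rfl⟩ := ho
      intro v hv
      exact absurd (headVars_r3 hv.1) not_false
  · -- fresh_inj
    intro n E ρ ν h hn ho
    have h7 := e_lt hn
    interval_cases n <;> simp [e, entries] at hn <;> subst hn <;> simp at ho
    · obtain ⟨rfl, rfl, rfl⟩ := ho
      intro v hv w hw _
      rw [exist_r1 hv, exist_r1 hw]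
    · obtain ⟨rfl, rfl, rfl⟩ := ho
      intro v hv w hw _
      rw [exist_r2 hv, exist_r2 hw]
    · obtain ⟨rfl, rfl, rfl⟩ := ho
      intro v hv
      exact absurd (headVars_r3 hv.1) not_false
  · -- nodup
    intro n m E E' hnm hn hm
    have h7 := e_lt hn
    have h7' := e_lt hm
    interval_cases n <;> interval_cases m <;> simp [e, entries] at hn hm <;>
      subst hn <;> subst hm <;> simp [fA, fB, fT0, fS0, fT1, fS2, fQ]
  · -- fair
    intro ρ hρ ν _
    rcases hρ with rfl | rfl | rfl
    · refine ⟨fun v => if v = 0 then ν 0 else .null 1, ?_, ?_⟩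
      · intro v hv; rw [bodyVars_r1 hv]; simp
      · intro h hh
        simp [r1] at hh
        subst hh
        refine ⟨4, ⟨fT1, some (r1, v1, aTh)⟩, rfl, ?_⟩
        simp [Atom.inst, aTh, RTerm.inst, fT1]
    · refine ⟨fun v => if v = 0 then ν 0 else .null 2, ?_, ?_⟩
      · intro v hv; rw [bodyVars_r2 hv]; simp
      · intro h hh
        simp [r2] at hh
        subst hh
        refine ⟨5, ⟨fS2, some (r2, v2, aSh)⟩, rfl, ?_⟩
        simp [Atom.inst, aSh, RTerm.inst, fS2]
    · refine ⟨ν, fun v _ => rfl, ?_⟩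
      intro h hh
      simp [r3] at hh
      subst hh
      exact ⟨6, ⟨fQ, some (r3, v3, aQ)⟩, rfl, by simp [Atom.inst, aQ, fQ]⟩

lemma edge_a : ChaseEdge e fT0 fQ :=
  ⟨6, ⟨fQ, some (r3, v3, aQ)⟩, r3, v3, aQ, rfl, rfl, rfl, aTb, by simp [r3],
    by simp [Atom.inst, aTb, RTerm.inst, v3, fT0]⟩

lemma no_edge_b (x : Fact ℕ Unit ℕ) : ¬ ChaseEdge e fT1 x := by
  rintro ⟨n, E, ρ, ν, h, hn, hf, ho, c, hc, hi⟩
  have h7 := e_lt hn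
  interval_cases n <;> simp [e, entries] at hn <;> subst hn <;> simp at ho
  · obtain ⟨rfl, rfl, rfl⟩ := ho
    simp [r1] at hc
    subst hc
    simp [Atom.inst, aA, RTerm.inst, v1, fT1] at hi
  · obtain ⟨rfl, rfl, rfl⟩ := ho
    simp [r2] at hc
    subst hc
    simp [Atom.inst, aB, RTerm.inst, v2, fT1] at hi
  · obtain ⟨rfl, rfl, rfl⟩ := ho
    simp [r3] at hc
    rcases hc with rfl | rfl
    · simp [Atom.inst, aTb, RTerm.inst, v3, fT1] at hi
    · simp [Atom.inst, aSb, RTerm.inst, v3, fT1] at hi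

lemma reach_b {x : Fact ℕ Unit ℕ} (hx : Relation.ReflTransGen (ChaseEdge e) fT1 x) :
    x = fT1 := by
  induction hx with
  | refl => rfl
  | tail _ hbc ih =>
    rw [ih] at hbc
    exact absurd hbc (no_edge_b _)

end Ex3

/-- **Example 3 (claim).**  There exist a database `D`, a set `Γ` of warded
Datalog± rules containing a join on a harmful variable, and two facts `a`, `b`
in `chase-graph(D,Γ)` such that `a` and `b` are isomorphic but `subgraph(a)`
is not isomorphic to `subgraph(b)`: pruning the chase graph on the basis of
isomorphism of labelled nulls is not correct without harmlessness. -/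
theorem harmful_join_breaks_subgraph_isomorphism :
    ∃ (P C V N : Type) (D : Set (Fact P C N)) (Γ : Set (Rule P C V)),
      Warded Γ ∧ (∃ ρ ∈ Γ, HasHarmfulJoin Γ ρ) ∧
      ∃ e : ℕ → Option (ChaseEntry P C V N), IsChaseRun D Γ e ∧
        ∃ a b : Fact P C N, a ∈ runFacts e ∧ b ∈ runFacts e ∧ FactIso a b ∧
          ¬ SubIso (ChaseEdge e) FactIso a b := by
  refine ⟨ℕ, Unit, ℕ, ℕ, Ex3.D, Ex3.G, Ex3.warded,
    ⟨Ex3.r3, by simp [Ex3.G], Ex3.harmful_join⟩,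
    Ex3.e, Ex3.chaseRun, Ex3.fT0, Ex3.fT1, Ex3.fT0_mem, Ex3.fT1_mem, ?_, ?_⟩
  · exact ⟨rfl, Equiv.swap 0 1, by simp [Ex3.fT0, Ex3.fT1, GTerm.mapNull]⟩
  · rintro ⟨φ, hiso, -⟩
    have hq : Ex3.fQ ∈ Reach (ChaseEdge Ex3.e) Ex3.fT0 :=
      Relation.ReflTransGen.single Ex3.edge_a
    have h1 := hiso ⟨Ex3.fQ, hq⟩
    have h2 : (φ ⟨Ex3.fQ, hq⟩).1 = Ex3.fT1 := Ex3.reach_b (φ ⟨Ex3.fQ, hq⟩).2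
    rw [h2] at h1
    obtain ⟨hp, -⟩ := h1
    simp [Ex3.fQ, Ex3.fT1] at hp

end Vadalog
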